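/- Let f : 𝕆 → 𝕆 be ℝ-linear such that Re(f(px) − p·f(x)) = 0 for all p, x ∈ 𝕆 (f is left para-linear). Then for every element x of the standard basis e₀=1, e₁, …, e₇ of 𝕆, the i-th real coordinate of f(x) equals Re(f(conj(eᵢ)·x)) for i = 0, …, 7; equivalently f(x) = Re f(x) − Σ_{i=1}^{7} eᵢ · Re f(eᵢ x). -/

import Mathlib

/-!
Para-linearity gives `Re f(eᵢ x) = Re (eᵢ f(x))`, and for every octonion `y` and `i ≥ 1` the real
part `Re (eᵢ y)` is minus the `i`-th coordinate of `y`; so the right-hand side is the coordinate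
expansion of `f x` in the standard basis.
-/

noncomputable section

open Quaternion

/-- The octonions, as the Cayley–Dickson double of the quaternions. -/
def Octo : Type := ℍ × ℍ

namespace Octo

instance : AddCommGroup Octo := inferInstanceAs (AddCommGroup (ℍ × ℍ))
instance : Module ℝ Octo := inferInstanceAs (Module ℝ (ℍ × ℍ))

/-- Cayley–Dickson multiplication: (a,b)(c,d) = (ac − d̄b, da + bc̄). -/
instance : Mul Octo :=
  ⟨fun x y => ((x.1 * y.1 - star y.2 * x.2, y.2 * x.1 + x.2 * star y.1) : ℍ × ℍ)⟩

/-- Octonionic conjugation. -/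
def conj (x : Octo) : Octo := ((star x.1, -x.2) : ℍ × ℍ)

/-- Real part. -/
def re (x : Octo) : ℝ := x.1.re

/-- Squared norm. -/
def normSq (x : Octo) : ℝ := re (x * conj x)

/-- The standard basis e₀ = 1, e₁, …, e₇. -/
def e : Fin 8 → Octo :=
  ![((1, 0) : ℍ × ℍ), ((⟨0,1,0,0⟩, 0) : ℍ × ℍ), ((⟨0,0,1,0⟩, 0) : ℍ × ℍ),
    ((⟨0,0,0,1⟩, 0) : ℍ × ℍ), ((0, 1) : ℍ × ℍ), ((0, ⟨0,1,0,0⟩) : ℍ × ℍ),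
    ((0, ⟨0,0,1,0⟩) : ℍ × ℍ), ((0, ⟨0,0,0,1⟩) : ℍ × ℍ)]

/-- Inverse: p⁻¹ = conj p / |p|². -/
def inv (x : Octo) : Octo := (normSq x)⁻¹ • conj x

/-- The associator [a,b,c] = (ab)c − a(bc). -/
def assoc (a b c : Octo) : Octo := a * b * c - a * (b * c)

/-- Left para-linear map: ℝ-linear with Re(f(px) − p f(x)) = 0. -/
def IsParaLinear (f : Octo → Octo) : Prop :=
  IsLinearMap ℝ f ∧ ∀ p x : Octo, re (f (p * x) - p * f x) = 0

end Octo

namespace Octo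

@[simp] theorem fst_add (x y : Octo) : (x + y).1 = x.1 + y.1 := rfl
@[simp] theorem snd_add (x y : Octo) : (x + y).2 = x.2 + y.2 := rfl
@[simp] theorem fst_sub (x y : Octo) : (x - y).1 = x.1 - y.1 := rfl
@[simp] theorem snd_sub (x y : Octo) : (x - y).2 = x.2 - y.2 := rfl
@[simp] theorem fst_smul (r : ℝ) (x : Octo) : (r • x).1 = r • x.1 := rfl
@[simp] theorem snd_smul (r : ℝ) (x : Octo) : (r • x).2 = r • x.2 := rfl
@[simp] theorem fst_mul (x y : Octo) : (x * y).1 = x.1 * y.1 - star y.2 * x.2 := rfl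

theorem re_sub (x y : Octo) : re (x - y) = re x - re y := rfl

theorem IsParaLinear.re_map_mul {f : Octo → Octo} (hf : IsParaLinear f) (p x : Octo) :
    re (f (p * x)) = re (p * f x) :=
  sub_eq_zero.1 ((re_sub _ _).symm.trans (hf.2 p x))

theorem eq_re_smul_sub_sum_re_mul (y : Octo) :
    y = re y • e 0 - ∑ i ∈ Finset.Icc (1 : Fin 8) 7, re (e i * y) • e i := by
  rw [show Finset.Icc (1 : Fin 8) 7 = {1, 2, 3, 4, 5, 6, 7} by decide]
  simp +decide only [Finset.sum_insert, Finset.mem_insert, Finset.mem_singleton,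
    Finset.sum_singleton]
  -- `e` is unfolded last: once its entries are literals, `Quaternion.re_mul` no longer matches.
  refine Prod.ext ?_ ?_ <;> ext <;> simp [re, Quaternion.re_mul] <;> simp [e]

end Octo

theorem stmt8 (f : Octo → Octo) (hf : Octo.IsParaLinear f) (x : Octo) :
    f x = Octo.re (f x) • Octo.e 0
      - ∑ i ∈ Finset.Icc (1 : Fin 8) 7, Octo.re (f (Octo.e i * x)) • Octo.e i := by
  simp only [hf.re_map_mul]
  exact Octo.eq_re_smul_sub_sum_re_mul (f x)
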